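/- The exploiter's worst-case best-response set BR(X*) equals {y ∈ Δ(m) : ∃ w ∈ ℝ^m_{≥0}, e_iᵀBy + (z*·1ᵀ − e_iᵀA)w ≥ p_e for all i ∈ [n]}, where p_e = max_{y∈Δ(m)} min_{x∈X*} xᵀBy. -/

import Mathlib

open Matrix

noncomputable def pay {n m : ℕ} (A : Matrix (Fin n) (Fin m) ℝ)
    (x : Fin n → ℝ) (y : Fin m → ℝ) : ℝ := x ⬝ᵥ (A *ᵥ y)

noncomputable def payPure {n m : ℕ} (A : Matrix (Fin n) (Fin m) ℝ)
    (x : Fin n → ℝ) (j : Fin m) : ℝ := x ⬝ᵥ (A *ᵥ Pi.single j 1)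

/-- `z* = max_{x ∈ Δ(n)} min_{j ∈ [m]} (xᵀA)_j`. -/
noncomputable def zStar {n m : ℕ} (A : Matrix (Fin n) (Fin m) ℝ) : ℝ :=
  sSup ((fun x => sInf (Set.range (payPure A x))) '' stdSimplex ℝ (Fin n))

/-- The polytope `X* = {x ∈ Δ(n) : z* ≤ xᵀAe_j ∀ j}` of victim maximin strategies. -/
noncomputable def Xstar {n m : ℕ} (A : Matrix (Fin n) (Fin m) ℝ) : Set (Fin n → ℝ) :=
  {x | x ∈ stdSimplex ℝ (Fin n) ∧ ∀ j : Fin m, zStar A ≤ payPure A x j}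

/-- `p_e = max_{y ∈ Δ(m)} min_{x ∈ X*} xᵀBy`. -/
noncomputable def pE {n m : ℕ} (A B : Matrix (Fin n) (Fin m) ℝ) : ℝ :=
  sSup ((fun y => sInf ((fun x => pay B x y) '' Xstar A)) '' stdSimplex ℝ (Fin m))

/-- `BR(X*) = argmax_{y ∈ Δ(m)} min_{x ∈ X*} xᵀBy`. -/
noncomputable def BRSet {n m : ℕ} (A B : Matrix (Fin n) (Fin m) ℝ) : Set (Fin m → ℝ) :=
  {y | y ∈ stdSimplex ℝ (Fin m) ∧ ∀ y' ∈ stdSimplex ℝ (Fin m),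
    sInf ((fun x => pay B x y') '' Xstar A) ≤ sInf ((fun x => pay B x y) '' Xstar A)}


/-!
A strategy `y ∈ Δ(m)` is a worst-case best response iff `p_e ≤ xᵀBy` for every `x ∈ X*`; here `X*`
is nonempty because the maximin value `z*` is attained on the compact simplex. The set `X*` is the
slice `∑ xᵢ = 1` of the polyhedral cone `{x ≥ 0 : xᵀ(A - z*𝟙) ≥ 0}`, so by homogeneity the condition
says that `x ↦ xᵀ(By - p_e𝟙)` is nonnegative on that cone. Farkas' lemma turns this into the
existence of `w ≥ 0` with `(A - z*𝟙)w ≤ By - p_e𝟙`, which is the certificate in the statement.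
Farkas' lemma itself comes from the separation theorem for closed cones; a finitely generated cone
is closed because, by the conic Carathéodory theorem, it is a finite union of images of orthants
under injective linear maps.
-/

open Set

section ConicCaratheodory

variable {𝕜 ι E : Type*} [Field 𝕜] [LinearOrder 𝕜] [IsStrictOrderedRing 𝕜]
  [AddCommGroup E] [Module 𝕜 E]

lemma Finset.exists_nonneg_sub_mul_eq_zero {S : Finset ι} {a g : ι → 𝕜}
    (ha : ∀ t ∈ S, 0 ≤ a t) (hg : ∃ t ∈ S, 0 < g t) :
    ∃ r : 𝕜, ∃ t₀ ∈ S, (∀ t ∈ S, 0 ≤ a t - r * g t) ∧ a t₀ - r * g t₀ = 0 := by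
  classical
  obtain ⟨t₀, ht₀, hmin⟩ := Finset.exists_min_image (S.filter fun t => 0 < g t)
    (fun t => a t / g t) (by simpa [Finset.Nonempty] using hg)
  rw [Finset.mem_filter] at ht₀
  have hr : 0 ≤ a t₀ / g t₀ := div_nonneg (ha t₀ ht₀.1) ht₀.2.le
  refine ⟨a t₀ / g t₀, t₀, ht₀.1, fun t ht => ?_, by field_simp [ht₀.2.ne']; ring⟩
  rcases le_or_gt (g t) 0 with hgt | hgt
  · nlinarith [ha t ht]
  · have := hmin t (Finset.mem_filter.2 ⟨ht, hgt⟩)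
    rw [le_div_iff₀ hgt] at this
    linarith

lemma exists_erase_nonneg_sum_smul_eq {v : ι → E} {S : Finset ι} (hS : ¬LinearIndepOn 𝕜 v S)
    {a : ι → 𝕜} (ha : ∀ t ∈ S, 0 ≤ a t) :
    ∃ t₀ ∈ S, ∃ b : ι → 𝕜, (∀ t ∈ S, 0 ≤ b t) ∧ b t₀ = 0 ∧
      ∑ t ∈ S, b t • v t = ∑ t ∈ S, a t • v t := by
  obtain ⟨g, hg, t₁, ht₁, hgt₁⟩ := not_linearIndepOn_finset_iff.1 hS
  -- rescaling `g` by `(g t₁)⁻¹` makes one of its coefficients positive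
  obtain ⟨r, t₀, ht₀, hnonneg, hzero⟩ := Finset.exists_nonneg_sub_mul_eq_zero
    (g := fun t => (g t₁)⁻¹ * g t) ha ⟨t₁, ht₁, by simp [hgt₁]⟩
  refine ⟨t₀, ht₀, fun t => a t - r * ((g t₁)⁻¹ * g t), hnonneg, hzero, ?_⟩
  simp only [sub_smul, Finset.sum_sub_distrib, mul_smul, ← Finset.smul_sum, hg, smul_zero,
    sub_zero]

lemma exists_linearIndepOn_nonneg_sum_smul_eq (v : ι → E) (S : Finset ι) (a : ι → 𝕜)
    (ha : ∀ t ∈ S, 0 ≤ a t) :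
    ∃ T ⊆ S, LinearIndepOn 𝕜 v T ∧ ∃ b : ι → 𝕜, (∀ t ∈ T, 0 ≤ b t) ∧
      ∑ t ∈ T, b t • v t = ∑ t ∈ S, a t • v t := by
  classical
  induction S using Finset.strongInduction generalizing a with
  | H S ih =>
  by_cases hS : LinearIndepOn 𝕜 v S
  · exact ⟨S, subset_rfl, hS, a, ha, rfl⟩
  obtain ⟨t₀, ht₀, b, hb, hbt₀, hsum⟩ := exists_erase_nonneg_sum_smul_eq hS ha
  obtain ⟨T, hTS, hT, c, hc, hcsum⟩ := ih _ (Finset.erase_ssubset ht₀) b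
    fun t ht => hb t (Finset.mem_of_mem_erase ht)
  refine ⟨T, hTS.trans (Finset.erase_subset _ _), hT, c, hc, ?_⟩
  rw [hcsum, Finset.sum_erase _ (by simp [hbt₀]), hsum]

end ConicCaratheodory

namespace PointedCone

variable {𝕜 ι E : Type*} [Fintype ι]

lemma mem_hull_range_iff [Semiring 𝕜] [PartialOrder 𝕜] [IsOrderedRing 𝕜] [AddCommMonoid E]
    [Module 𝕜 E] {v : ι → E} {x : E} :
    x ∈ hull 𝕜 (range v) ↔ ∃ a : ι → 𝕜, 0 ≤ a ∧ ∑ t, a t • v t = x := by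
  rw [Submodule.mem_span_range_iff_exists_fun]
  exact ⟨fun ⟨c, hc⟩ => ⟨fun t => c t, fun t => (c t).2, hc⟩,
    fun ⟨a, ha, hx⟩ => ⟨fun t => ⟨a t, ha t⟩, hx⟩⟩

variable [AddCommGroup E] [Module ℝ E] [TopologicalSpace E] [IsTopologicalAddGroup E]
  [ContinuousSMul ℝ E] [T2Space E]

lemma isClosed_hull_range (v : ι → E) : IsClosed (hull ℝ (range v) : Set E) := by
  classical
  have hunion : (hull ℝ (range v) : Set E) = ⋃ (T : Finset ι) (_ : LinearIndepOn ℝ v T),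
      Fintype.linearCombination ℝ (fun t : (T : Set ι) => v t) '' Ici 0 := by
    refine Subset.antisymm (fun x hx => ?_) (iUnion₂_subset fun T _ => ?_)
    · obtain ⟨a, ha, rfl⟩ := mem_hull_range_iff.1 hx
      obtain ⟨T, -, hT, b, hb, hsum⟩ :=
        exists_linearIndepOn_nonneg_sum_smul_eq v Finset.univ a fun t _ => ha t
      refine mem_iUnion₂.2 ⟨T, hT, fun t => b t, fun t => hb t t.2, ?_⟩
      rw [Fintype.linearCombination_apply, ← hsum]
      exact T.sum_coe_sort fun t => b t • v t
    · rintro _ ⟨b, hb, rfl⟩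
      rw [Fintype.linearCombination_apply]
      exact Submodule.sum_mem _ fun t _ => smul_mem _ (hb t) (subset_hull (mem_range_self _))
  rw [hunion]
  refine isClosed_iUnion_of_finite fun T => isClosed_iUnion_of_finite fun hT => ?_
  exact (LinearMap.isClosedEmbedding_of_injective (LinearMap.ker_eq_bot.2
    (linearIndependent_iff_injective_fintypeLinearCombination.1 hT))).isClosedMap _ isClosed_Ici

end PointedCone

theorem Matrix.exists_nonneg_mulVec_le_iff {ι κ : Type*} [Fintype ι] [Fintype κ]
    (M : Matrix κ ι ℝ) (c : κ → ℝ) :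
    (∃ w, 0 ≤ w ∧ M *ᵥ w ≤ c) ↔ ∀ x, 0 ≤ x → 0 ≤ x ᵥ* M → 0 ≤ x ⬝ᵥ c := by
  classical
  constructor
  · rintro ⟨w, hw, hMw⟩ x hx hxM
    calc 0 ≤ x ᵥ* M ⬝ᵥ w := dotProduct_nonneg_of_nonneg hxM hw
      _ = x ⬝ᵥ M *ᵥ w := (dotProduct_mulVec x M w).symm
      _ ≤ x ⬝ᵥ c := dotProduct_le_dotProduct_of_nonneg_left hMw hx
  intro h
  by_contra hc
  -- `∃ w ≥ 0, M w ≤ c` says that `c` lies in the cone spanned by the columns of `M` and the `eᵢ`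
  let g : ι ⊕ κ → κ → ℝ := Sum.elim (fun j i => M i j) fun i => Pi.single i 1
  let C : ProperCone ℝ (κ → ℝ) := ⟨PointedCone.hull ℝ (range g), PointedCone.isClosed_hull_range g⟩
  have hgC : ∀ t, g t ∈ C := fun t => PointedCone.subset_hull (mem_range_self t)
  have hcC : c ∉ C := by
    intro hcC
    obtain ⟨a, ha, hac⟩ := PointedCone.mem_hull_range_iff.1 hcC
    refine hc ⟨fun j => a (Sum.inl j), fun j => ha _, fun i => ?_⟩
    have hci := congrFun hac i
    simp only [g, Finset.sum_apply, Pi.smul_apply, smul_eq_mul, Fintype.sum_sum_type, Sum.elim_inl,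
      Sum.elim_inr, Pi.single_apply, mul_ite, mul_one, mul_zero, Finset.sum_ite_eq,
      Finset.mem_univ, if_true] at hci
    simp_rw [mulVec, dotProduct, mul_comm (M i _)]
    have hai : 0 ≤ a (.inr i) := ha _
    rw [← hci]
    exact le_add_of_nonneg_right hai
  obtain ⟨f, hfC, hfc⟩ := C.hyperplane_separation_point hcC
  set x := (dotProductEquiv ℝ κ).symm f.toLinearMap
  have hf : ∀ z, f z = x ⬝ᵥ z := fun z =>
    (LinearMap.congr_fun ((dotProductEquiv ℝ κ).apply_symm_apply f.toLinearMap) z).symm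
  have hx : 0 ≤ x := fun i => hfC _ (hgC (.inr i))
  have hxM : 0 ≤ x ᵥ* M := fun j => (hfC _ (hgC (.inl j))).trans_eq (hf _)
  exact (h x hx hxM).not_gt (hf c ▸ hfc)

lemma inv_sum_smul_mem_stdSimplex {ι : Type*} [Fintype ι] {x : ι → ℝ} (hx : 0 ≤ x)
    (hs : 0 < ∑ i, x i) : (∑ i, x i)⁻¹ • x ∈ stdSimplex ℝ ι :=
  ⟨fun i => smul_nonneg (inv_nonneg.2 hs.le) (hx i), by
    simp [← Finset.mul_sum, inv_mul_cancel₀ hs.ne']⟩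

lemma Matrix.forall_nonneg_iff_forall_stdSimplex {ι κ : Type*} [Fintype ι] [Fintype κ]
    (M : Matrix κ ι ℝ) (c : κ → ℝ) :
    (∀ x, 0 ≤ x → 0 ≤ x ᵥ* M → 0 ≤ x ⬝ᵥ c) ↔
      ∀ x ∈ stdSimplex ℝ κ, 0 ≤ x ᵥ* M → 0 ≤ x ⬝ᵥ c := by
  refine ⟨fun h x hx => h x hx.1, fun h x hx hxM => ?_⟩
  rcases (Finset.sum_nonneg fun i _ => hx i).eq_or_lt with hs | hs
  · rw [(Fintype.sum_eq_zero_iff_of_nonneg hx).1 hs.symm, zero_dotProduct]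
  · have hs' : 0 < (∑ i, x i)⁻¹ := inv_pos.2 hs
    have := h _ (inv_sum_smul_mem_stdSimplex hx hs) (by
      rw [smul_vecMul]; exact smul_nonneg hs'.le hxM)
    rw [smul_dotProduct, smul_eq_mul] at this
    exact nonneg_of_mul_nonneg_right this hs'

lemma dotProduct_const_of_mem_stdSimplex {ι : Type*} [Fintype ι] {x : ι → ℝ}
    (hx : x ∈ stdSimplex ℝ ι) (p : ℝ) : x ⬝ᵥ (fun _ => p) = p := by
  simp only [dotProduct, ← Finset.sum_mul, hx.2, one_mul]

lemma vecMul_sub_const_of_mem_stdSimplex {ι κ : Type*} [Fintype ι] (A : Matrix ι κ ℝ)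
    {x : ι → ℝ} (hx : x ∈ stdSimplex ℝ ι) (z : ℝ) :
    x ᵥ* (A - of fun _ _ => z) = x ᵥ* A - fun _ => z := by
  ext j
  rw [vecMul_sub, Pi.sub_apply, Pi.sub_apply]
  exact congrArg ((x ᵥ* A) j - ·) (dotProduct_const_of_mem_stdSimplex hx z)

section Game

variable {n m : ℕ} (A B : Matrix (Fin n) (Fin m) ℝ)

noncomputable def worstCasePay (y : Fin m → ℝ) : ℝ :=
  sInf ((fun x => pay B x y) '' Xstar A)

lemma payPure_eq_vecMul (x : Fin n → ℝ) (j : Fin m) : payPure A x j = (x ᵥ* A) j := by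
  rw [payPure, dotProduct_mulVec, dotProduct_single_one]

lemma forall_mem_Xstar_le_pay_iff (y : Fin m → ℝ) (p : ℝ) :
    (∀ x ∈ Xstar A, p ≤ pay B x y) ↔
      ∃ w : Fin m → ℝ, (∀ j, 0 ≤ w j) ∧
        ∀ i, p ≤ (B *ᵥ y) i + (zStar A * ∑ j, w j - (A *ᵥ w) i) := by
  have hcert : ∀ w, (A - of fun _ _ => zStar A) *ᵥ w ≤ B *ᵥ y - (fun _ => p) ↔
      ∀ i, p ≤ (B *ᵥ y) i + (zStar A * ∑ j, w j - (A *ᵥ w) i) := by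
    intro w
    refine forall_congr' fun i => ?_
    have hconst : ((of fun _ _ => zStar A) *ᵥ w) i = zStar A * ∑ j, w j := by
      simp [mulVec, dotProduct, Finset.mul_sum]
    rw [sub_mulVec, Pi.sub_apply, Pi.sub_apply, hconst]
    constructor <;> intro h <;> linarith
  have hval : ∀ x ∈ stdSimplex ℝ (Fin n), x ⬝ᵥ (B *ᵥ y - fun _ => p) = pay B x y - p := by
    intro x hx
    rw [dotProduct_sub, dotProduct_const_of_mem_stdSimplex hx, pay]
  simp only [Xstar, mem_ofPred_eq, and_imp, payPure_eq_vecMul]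
  calc (∀ x ∈ stdSimplex ℝ (Fin n), (∀ j, zStar A ≤ (x ᵥ* A) j) → p ≤ pay B x y)
      ↔ ∀ x ∈ stdSimplex ℝ (Fin n), 0 ≤ x ᵥ* (A - of fun _ _ => zStar A) →
          0 ≤ x ⬝ᵥ (B *ᵥ y - fun _ => p) := by
        refine forall₂_congr fun x hx => ?_
        rw [vecMul_sub_const_of_mem_stdSimplex A hx, hval x hx, Pi.le_def, sub_nonneg]
        simp only [Pi.zero_apply, Pi.sub_apply, sub_nonneg]
    _ ↔ ∃ w, 0 ≤ w ∧ (A - of fun _ _ => zStar A) *ᵥ w ≤ B *ᵥ y - fun _ => p := by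
        rw [exists_nonneg_mulVec_le_iff, forall_nonneg_iff_forall_stdSimplex]
    _ ↔ _ := by simp only [hcert, Pi.le_def, Pi.zero_apply]

lemma continuous_pay_left (y : Fin m → ℝ) : Continuous fun x => pay B x y := by
  unfold pay; fun_prop

lemma continuous_pay_right (x : Fin n → ℝ) : Continuous (pay B x) := by
  unfold pay; fun_prop

lemma Xstar_nonempty (hn : 0 < n) : (Xstar A).Nonempty := by
  have hΔ : (stdSimplex ℝ (Fin n)).Nonempty := ⟨_, single_mem_stdSimplex ℝ (⟨0, hn⟩ : Fin n)⟩
  cases isEmpty_or_nonempty (Fin m)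
  · obtain ⟨x, hx⟩ := hΔ
    exact ⟨x, hx, isEmptyElim⟩
  have hcont : Continuous fun x => sInf (range (payPure A x)) := by
    simp_rw [sInf_range, ← Finset.inf'_univ_eq_ciInf]
    exact Continuous.finset_inf'_apply _ fun j _ => by unfold payPure; fun_prop
  obtain ⟨x, hx, hxz⟩ := ((isCompact_stdSimplex ℝ (Fin n)).image hcont).sSup_mem (hΔ.image _)
  refine ⟨x, hx, fun j => ?_⟩
  rw [zStar, ← hxz]
  exact csInf_le (finite_range _).bddBelow (mem_range_self j)

lemma bddBelow_pay_image_Xstar (y : Fin m → ℝ) : BddBelow ((fun x => pay B x y) '' Xstar A) :=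
  ((isCompact_stdSimplex ℝ (Fin n)).bddBelow_image (continuous_pay_left B y).continuousOn).mono
    (image_mono fun _ hx => hx.1)

lemma worstCasePay_le_pay {x : Fin n → ℝ} (hx : x ∈ Xstar A) (y : Fin m → ℝ) :
    worstCasePay A B y ≤ pay B x y :=
  csInf_le (bddBelow_pay_image_Xstar A B y) (mem_image_of_mem _ hx)

lemma le_worstCasePay_iff (hX : (Xstar A).Nonempty) (y : Fin m → ℝ) (p : ℝ) :
    p ≤ worstCasePay A B y ↔ ∀ x ∈ Xstar A, p ≤ pay B x y := by
  rw [worstCasePay, le_csInf_iff (bddBelow_pay_image_Xstar A B y) (hX.image _), forall_mem_image]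

lemma bddAbove_worstCasePay_image (hX : (Xstar A).Nonempty) :
    BddAbove (worstCasePay A B '' stdSimplex ℝ (Fin m)) := by
  obtain ⟨x, hx⟩ := hX
  obtain ⟨M, hM⟩ := (isCompact_stdSimplex ℝ (Fin m)).bddAbove_image
    (continuous_pay_right B x).continuousOn
  exact ⟨M, forall_mem_image.2 fun y hy =>
    (worstCasePay_le_pay A B hx y).trans (hM (mem_image_of_mem _ hy))⟩

lemma mem_BRSet_iff (hX : (Xstar A).Nonempty) {y : Fin m → ℝ} :
    y ∈ BRSet A B ↔ y ∈ stdSimplex ℝ (Fin m) ∧ pE A B ≤ worstCasePay A B y := by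
  refine and_congr_right fun hy => ⟨fun hBR => ?_, fun hpE y' hy' => ?_⟩
  · exact csSup_le ⟨_, mem_image_of_mem _ hy⟩ (forall_mem_image.2 hBR)
  · exact (le_csSup (bddAbove_worstCasePay_image A B hX) (mem_image_of_mem _ hy')).trans hpE

end Game

theorem BRSet_eq_projection_general {n m : ℕ} (hn : 0 < n)
    (A B : Matrix (Fin n) (Fin m) ℝ) :
    BRSet A B =
      {y | y ∈ stdSimplex ℝ (Fin m) ∧ ∃ w : Fin m → ℝ, (∀ j, 0 ≤ w j) ∧
        ∀ i : Fin n, pE A B ≤ (B *ᵥ y) i + (zStar A * (∑ j, w j) - (A *ᵥ w) i)} := by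
  have hX := Xstar_nonempty A hn
  ext y
  rw [mem_BRSet_iff A B hX, le_worstCasePay_iff A B hX, forall_mem_Xstar_le_pay_iff]
  rfl

/-- `BR(X*)` equals the projection polytope
`{y ∈ Δ(m) : ∃ w ≥ 0, e_iᵀBy + (z*·1ᵀ − e_iᵀA)w ≥ p_e ∀ i}`. -/
theorem BRSet_eq_projection {n m : ℕ} (hn : 0 < n) (hm : 0 < m)
    (A B : Matrix (Fin n) (Fin m) ℝ) :
    BRSet A B =
      {y | y ∈ stdSimplex ℝ (Fin m) ∧ ∃ w : Fin m → ℝ, (∀ j, 0 ≤ w j) ∧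
        ∀ i : Fin n, pE A B ≤ (B *ᵥ y) i + (zStar A * (∑ j, w j) - (A *ᵥ w) i)} :=
  BRSet_eq_projection_general hn A B
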